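/- Consider a mapping F : ℝ^n ⇒ ℝ^n and let (x̄, ȳ) ∈ gph F. Then F is strongly metrically subregular around (x̄, ȳ) if and only if the implication ((u, 0) ∈ gph D^♯F(x̄, ȳ) ⟹ u = 0) holds; and in this case lsubreg F(x̄, ȳ) = sup{‖u‖ : (u, v) ∈ gph D^♯F(x̄, ȳ), ‖v‖ ≤ 1}. -/

import Mathlib

open Filter Topology Metric Set
open scoped InnerProductSpace RealInnerProductSpace ENNReal NNReal

noncomputable section

namespace SCD

abbrev E (n : ℕ) := EuclideanSpace ℝ (Fin n)
abbrev E2 (n : ℕ) := WithLp 2 (E n × E n)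

variable {n : ℕ}

def lp2 (n : ℕ) : E2 n ≃ₗ[ℝ] E n × E n := WithLp.linearEquiv 2 ℝ (E n × E n)
def mk2 (u v : E n) : E2 n := (lp2 n).symm (u, v)
def fst2 (z : E2 n) : E n := (lp2 n z).1
def snd2 (z : E2 n) : E n := (lp2 n z).2

instance : FiniteDimensional ℝ (E2 n) := Module.Finite.equiv (lp2 n).symm

def tcone {H : Type*} [NormedAddCommGroup H] [NormedSpace ℝ H] (A : Set H) (z : H) : Set H :=
  {w | ∃ t : ℕ → ℝ, ∃ wk : ℕ → H, (∀ k, 0 < t k) ∧ Tendsto t atTop (𝓝 0) ∧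
      Tendsto wk atTop (𝓝 w) ∧ ∀ k, z + t k • wk k ∈ A}

def gph (F : E n → Set (E n)) : Set (E2 n) := {z | snd2 z ∈ F (fst2 z)}
def projC (L : Submodule ℝ (E2 n)) : E2 n →L[ℝ] E2 n := L.subtypeL.comp (L.orthogonalProjectionOnto)
def dZ (L₁ L₂ : Submodule ℝ (E2 n)) : ℝ := ‖projC L₁ - projC L₂‖

def Sneg (n : ℕ) : E2 n ≃ₗ[ℝ] E2 n :=
  (lp2 n).trans (((LinearEquiv.prodComm ℝ (E n) (E n)).trans
    ((LinearEquiv.neg ℝ).prodCongr (LinearEquiv.refl ℝ (E n)))).trans (lp2 n).symm)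

def adjS (L : Submodule ℝ (E2 n)) : Submodule ℝ (E2 n) := Lᗮ.map (Sneg n).toLinearMap

/-- `O_F`: the set of points of `gph F` where `F` is graphically smooth of dimension `n`,
i.e. the tangent cone to the graph is an `n`-dimensional linear subspace. -/
def OF (F : E n → Set (E n)) : Set (E2 n) :=
  {z | z ∈ gph F ∧ ∃ L : Submodule ℝ (E2 n),
    Module.finrank ℝ L = n ∧ (L : Set (E2 n)) = tcone (gph F) z}

/-- The primal generalized derivative `Sp F(x,y)`. -/
def Sp (F : E n → Set (E n)) (z : E2 n) : Set (Submodule ℝ (E2 n)) :=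
  {L | Module.finrank ℝ L = n ∧ ∃ (zk : ℕ → E2 n) (Lk : ℕ → Submodule ℝ (E2 n)),
      (∀ k, zk k ∈ gph F ∧ Module.finrank ℝ (Lk k) = n ∧
        ((Lk k : Set (E2 n)) = tcone (gph F) (zk k))) ∧
      Tendsto zk atTop (𝓝 z) ∧ Tendsto (fun k => dZ (Lk k) L) atTop (𝓝 0)}

/-- The dual generalized derivative `Sp* F(x,y)`. -/
def SpStar (F : E n → Set (E n)) (z : E2 n) : Set (Submodule ℝ (E2 n)) :=
  {L' | ∃ L ∈ Sp F z, L' = adjS L}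

/-- `F` has the SCD property at `z ∈ gph F`. -/
def SCDAt (F : E n → Set (E n)) (z : E2 n) : Prop := (Sp F z).Nonempty

/-- `F` has the SCD property around `z ∈ gph F`. -/
def SCDAround (F : E n → Set (E n)) (z : E2 n) : Prop :=
  ∃ δ > (0 : ℝ), ∀ z' ∈ gph F, dist z' z < δ → SCDAt F z'

/-- `Z_n^{reg}`: the subspaces `L ∈ Z_n` such that `(y*, 0) ∈ L` implies `y* = 0`. -/
def Znreg (n : ℕ) : Set (Submodule ℝ (E2 n)) :=
  {L | Module.finrank ℝ L = n ∧ ∀ y : E n, mk2 y 0 ∈ L → y = 0}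

/-- `F` is SCD regular around `z ∈ gph F`. -/
def SCDRegularAround (F : E n → Set (E n)) (z : E2 n) : Prop :=
  SCDAround F z ∧ ∀ L ∈ SpStar F z, L ∈ Znreg n

/-- The set of values `‖y*‖` for `(y*, x*)` in some `L ∈ Sp* F(x,y)` with `‖x*‖ ≤ 1`;
its supremum is the modulus of SCD regularity. -/
def scdregSet (F : E n → Set (E n)) (z : E2 n) : Set ℝ :=
  {r | ∃ L ∈ SpStar F z, ∃ w : E2 n, w ∈ L ∧ ‖snd2 w‖ ≤ 1 ∧ r = ‖fst2 w‖}

/-- The modulus of SCD regularity `scd reg F(x,y)`. -/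
def scdreg (F : E n → Set (E n)) (z : E2 n) : ℝ := sSup (scdregSet F z)

/-- The graph of the outer limiting graphical derivative `D^♯F(x̄,ȳ)`. -/
def DsharpG (F : E n → Set (E n)) (z : E2 n) : Set (E2 n) :=
  {w | ∃ (zk : ℕ → E2 n) (wk : ℕ → E2 n),
    (∀ k, zk k ∈ gph F ∧ wk k ∈ tcone (gph F) (zk k)) ∧
    Tendsto zk atTop (𝓝 z) ∧ Tendsto wk atTop (𝓝 w)}

/-- The regular (Fréchet) normal cone: the polar of the tangent cone. -/
def regN (A : Set (E2 n)) (z : E2 n) : Set (E2 n) := {w | ∀ v ∈ tcone A z, ⟪w, v⟫_ℝ ≤ 0}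

/-- The limiting (Mordukhovich) normal cone. -/
def limN (A : Set (E2 n)) (z : E2 n) : Set (E2 n) :=
  {w | ∃ (zk wk : ℕ → E2 n), (∀ k, zk k ∈ A ∧ wk k ∈ regN A (zk k)) ∧
    Tendsto zk atTop (𝓝 z) ∧ Tendsto wk atTop (𝓝 w)}

/-- The graph of the limiting coderivative: `(y*, x*)` with `(x*, -y*)` in the limiting
normal cone to the graph. -/
def coderivG (F : E n → Set (E n)) (z : E2 n) : Set (E2 n) :=
  {w | mk2 (snd2 w) (-(fst2 w)) ∈ limN (gph F) z}

/-- The graph of the strict (paratingent) derivative `D_*F(x̄,ȳ)`. -/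
def paraconeG (F : E n → Set (E n)) (z : E2 n) : Set (E2 n) :=
  {w | ∃ (t : ℕ → ℝ) (z1 z2 : ℕ → E2 n), (∀ k, 0 < t k) ∧ Tendsto t atTop (𝓝 0) ∧
    (∀ k, z1 k ∈ gph F ∧ z2 k ∈ gph F) ∧ Tendsto z1 atTop (𝓝 z) ∧ Tendsto z2 atTop (𝓝 z) ∧
    Tendsto (fun k => (t k)⁻¹ • (z2 k - z1 k)) atTop (𝓝 w)}

/-- The B-subdifferential of `f : U → ℝ^n` at `x`. -/
def Bsub (f : E n → E n) (U : Set (E n)) (x : E n) : Set (E n →L[ℝ] E n) :=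
  {A | ∃ xk : ℕ → E n, (∀ k, xk k ∈ U ∧ DifferentiableAt ℝ f (xk k)) ∧
    Tendsto xk atTop (𝓝 x) ∧ Tendsto (fun k => fderiv ℝ f (xk k)) atTop (𝓝 A)}

/-- A single-valued map `f` on `U` viewed as a set-valued map. -/
def sv (f : E n → E n) (U : Set (E n)) : E n → Set (E n) := fun x => {y | x ∈ U ∧ y = f x}

/-- The linear map `u ↦ (u, A u)`. -/
def graphMap (A : E n →L[ℝ] E n) : E n →ₗ[ℝ] E2 n :=
  (lp2 n).symm.toLinearMap.comp (LinearMap.prod LinearMap.id A.toLinearMap)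

/-- The subspace `rge(I, A) = {(u, Au) : u ∈ ℝ^n}`. -/
def rgeIA (A : E n →L[ℝ] E n) : Submodule ℝ (E2 n) := LinearMap.range (graphMap A)

/-- The linear map `p ↦ (C p, p)`. -/
def graphMapRev (C : E n →L[ℝ] E n) : E n →ₗ[ℝ] E2 n :=
  (lp2 n).symm.toLinearMap.comp (LinearMap.prod C.toLinearMap LinearMap.id)

/-- The subspace `rge(C, I) = {(C p, p) : p ∈ ℝ^n}`. -/
def rgeCI (C : E n →L[ℝ] E n) : Submodule ℝ (E2 n) := LinearMap.range (graphMapRev C)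

/-- The preimage map `F^{-1}(y)`. -/
def Finv (F : E n → Set (E n)) (y : E n) : Set (E n) := {x | y ∈ F x}

/-- Metric subregularity at `z ∈ gph F` with constant `κ`. -/
def SubregWith (F : E n → Set (E n)) (z : E2 n) (κ : ℝ) : Prop :=
  ∃ δ > (0 : ℝ), ∀ x' : E n, dist x' (fst2 z) < δ →
    EMetric.infEdist x' (Finv F (snd2 z)) ≤ ENNReal.ofReal κ * EMetric.infEdist (snd2 z) (F x')

/-- `F` is metrically subregular at `z ∈ gph F`. -/
def SubregAt (F : E n → Set (E n)) (z : E2 n) : Prop := ∃ κ, 0 ≤ κ ∧ SubregWith F z κ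

/-- The modulus of metric subregularity `subreg F(x,y)`. -/
def subregMod (F : E n → Set (E n)) (z : E2 n) : ℝ := sInf {κ | 0 ≤ κ ∧ SubregWith F z κ}

/-- `F` is strongly metrically subregular at `z ∈ gph F`. -/
def StrSubregAt (F : E n → Set (E n)) (z : E2 n) : Prop :=
  SubregAt F z ∧ ∃ δ > (0 : ℝ), ∀ x' ∈ Finv F (snd2 z), dist x' (fst2 z) < δ → x' = fst2 z

/-- `F` is strongly metrically subregular around `zb ∈ gph F` (with finite `lsubreg`). -/
def StrSubregAround (F : E n → Set (E n)) (zb : E2 n) : Prop :=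
  ∃ δ > (0 : ℝ), (∀ z ∈ gph F, dist z zb < δ → StrSubregAt F z) ∧
    ∃ c : ℝ, ∀ z ∈ gph F, dist z zb < δ → subregMod F z ≤ c

/-- `lsubreg F(x̄,ȳ)`: the limsup of `subreg F(x,y)` over graph points `(x,y) → (x̄,ȳ)`. -/
def lsubreg (F : E n → Set (E n)) (zb : E2 n) : ℝ :=
  Filter.limsup (fun z => subregMod F z) (𝓝[gph F] zb)

/-- Metric regularity around `zb ∈ gph F` with constant `κ`. -/
def RegWith (F : E n → Set (E n)) (zb : E2 n) (κ : ℝ) : Prop :=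
  ∃ δ > (0 : ℝ), ∀ x y : E n, dist x (fst2 zb) < δ → dist y (snd2 zb) < δ →
    EMetric.infEdist x (Finv F y) ≤ ENNReal.ofReal κ * EMetric.infEdist y (F x)

/-- `F` is metrically regular around `zb ∈ gph F`. -/
def MetrRegAround (F : E n → Set (E n)) (zb : E2 n) : Prop := ∃ κ, 0 ≤ κ ∧ RegWith F zb κ

/-- The modulus of metric regularity `reg F(x̄,ȳ)`. -/
def regMod (F : E n → Set (E n)) (zb : E2 n) : ℝ := sInf {κ | 0 ≤ κ ∧ RegWith F zb κ}

/-- `F` is strongly metrically regular around `zb ∈ gph F`: metrically regular and `F⁻¹`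
has a single-valued localization around `(ȳ, x̄)`. -/
def StrRegAround (F : E n → Set (E n)) (zb : E2 n) : Prop :=
  MetrRegAround F zb ∧
  ∃ (X' Y' : Set (E n)) (h : E n → E n), IsOpen X' ∧ IsOpen Y' ∧
    fst2 zb ∈ X' ∧ snd2 zb ∈ Y' ∧ h (snd2 zb) = fst2 zb ∧
    gph F ∩ {w | fst2 w ∈ X' ∧ snd2 w ∈ Y'} = {w | snd2 w ∈ Y' ∧ fst2 w = h (snd2 w)}

/-- `F` is SCD semismooth* at `zb ∈ gph F`. -/
def SCDSemismoothAt (F : E n → Set (E n)) (zb : E2 n) : Prop :=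
  SCDAround F zb ∧ ∀ ε > (0 : ℝ), ∃ δ > (0 : ℝ), ∀ z ∈ gph F, dist z zb ≤ δ →
    ∀ L ∈ SpStar F z, ∀ w : E2 n, w ∈ L →
      |⟪snd2 w, fst2 z - fst2 zb⟫_ℝ - ⟪fst2 w, snd2 z - snd2 zb⟫_ℝ| ≤ ε * ‖z - zb‖ * ‖w‖

/-- `F` is graphically Lipschitzian of dimension `n` at `zb` with transformation mapping `Φ`,
local inverse `Ψ`, neighborhood `W`, and `K`-Lipschitz map `f : U → ℝ^n`. -/
def GraphLipWith (F : E n → Set (E n)) (zb : E2 n) (Φ Ψ : E2 n → E2 n)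
    (W : Set (E2 n)) (U : Set (E n)) (f : E n → E n) (K : ℝ≥0) : Prop :=
  IsOpen W ∧ zb ∈ W ∧ ContDiffOn ℝ 1 Φ W ∧ Set.InjOn Φ W ∧ IsOpen (Φ '' W) ∧
  ContDiffOn ℝ 1 Ψ (Φ '' W) ∧ Set.LeftInvOn Ψ Φ W ∧
  IsOpen U ∧ LipschitzOnWith K f U ∧
  Φ '' (gph F ∩ W) = {w | fst2 w ∈ U ∧ snd2 w = f (fst2 w)}

/-- `F` is graphically Lipschitzian of dimension `n` at `zb` with transformation mapping `Φ`. -/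
def GraphLipAt (F : E n → Set (E n)) (zb : E2 n) (Φ : E2 n → E2 n) : Prop :=
  ∃ Ψ W U f K, GraphLipWith F zb Φ Ψ W U f K

/-- `∇̄^Φ F(x̄,ȳ)`: the `(2n)×n` matrices `Z` (as linear maps `ℝ^n → ℝ^{2n}`) with
`rge Z ∈ Sp F(x̄,ȳ)` and upper block of `∇Φ(x̄,ȳ)Z` equal to the identity. -/
def BsubPhi (F : E n → Set (E n)) (zb : E2 n) (Φ : E2 n → E2 n) : Set (E n →L[ℝ] E2 n) :=
  {Z | LinearMap.range (Z : E n →ₗ[ℝ] E2 n) ∈ Sp F zb ∧ ∀ p, fst2 (fderiv ℝ Φ zb (Z p)) = p}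

/-- A (globally) monotone set-valued map. -/
def MonoMap (T : E n → Set (E n)) : Prop :=
  ∀ x₁ y₁ x₂ y₂, y₁ ∈ T x₁ → y₂ ∈ T x₂ → 0 ≤ ⟪y₁ - y₂, x₁ - x₂⟫_ℝ

/-- `F` is locally maximally monotone at `z ∈ gph F`. -/
def LocMaxMonoAt (F : E n → Set (E n)) (z : E2 n) : Prop :=
  ∃ X Y : Set (E n), IsOpen X ∧ IsOpen Y ∧ fst2 z ∈ X ∧ snd2 z ∈ Y ∧
    (∀ w₁ ∈ gph F ∩ {w | fst2 w ∈ X ∧ snd2 w ∈ Y},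
     ∀ w₂ ∈ gph F ∩ {w | fst2 w ∈ X ∧ snd2 w ∈ Y},
       0 ≤ ⟪snd2 w₁ - snd2 w₂, fst2 w₁ - fst2 w₂⟫_ℝ) ∧
    ∀ T : E n → Set (E n), MonoMap T →
      gph F ∩ {w | fst2 w ∈ X ∧ snd2 w ∈ Y} ⊆ gph T →
      gph F ∩ {w | fst2 w ∈ X ∧ snd2 w ∈ Y} = gph T ∩ {w | fst2 w ∈ X ∧ snd2 w ∈ Y}

/-- `F` is locally maximally hypomonotone at `z ∈ gph F`:
`γI + F` is locally maximally monotone at `(x, γx + y)` for some `γ ≥ 0`. -/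
def LocMaxHypoAt (F : E n → Set (E n)) (z : E2 n) : Prop :=
  ∃ γ : ℝ, 0 ≤ γ ∧ LocMaxMonoAt (fun x => (fun y => γ • x + y) '' F x)
    (mk2 (fst2 z) (γ • fst2 z + snd2 z))

/-- A firmly nonexpansive matrix: `⟨Bv, v⟩ ≥ ‖Bv‖²` for all `v`. -/
def FirmNonexp (B : E n →L[ℝ] E n) : Prop := ∀ v, ‖B v‖ ^ 2 ≤ ⟪B v, v⟫_ℝ

/-!
At a graph point `z = (x, y)`, `F` is strongly subregular with constant `κ` iff, up to an
arbitrarily small increase of `κ`, every tangent `(u, v) ∈ T_{gph F}(z)` satisfies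
`‖u‖ ≤ κ ‖v‖` (the Levy–Rockafellar criterion); hence `subreg F z` is the best such bound.
By compactness of the unit sphere, a bound on the tangent cones near `(x̄, ȳ)` passes to the
outer limit `D♯F(x̄, ȳ)`, and conversely a bound `m` on `D♯F(x̄, ȳ)` forces the bound `m + ε` on
all tangent cones at graph points near `(x̄, ȳ)`. As `D♯F(x̄, ȳ)` is a cone, its best bound is the
supremum in the statement, and it has some bound iff it contains no `(u, 0)` with `u ≠ 0`.
-/

lemma snd2_add (z w : E2 n) : snd2 (z + w) = snd2 z + snd2 w := rfl
lemma fst2_sub (z w : E2 n) : fst2 (z - w) = fst2 z - fst2 w := rfl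
lemma snd2_sub (z w : E2 n) : snd2 (z - w) = snd2 z - snd2 w := rfl
lemma fst2_mk2 (u v : E n) : fst2 (mk2 u v) = u := rfl
lemma snd2_mk2 (u v : E n) : snd2 (mk2 u v) = v := rfl
lemma fst2_zero : fst2 (0 : E2 n) = 0 := rfl
lemma snd2_zero : snd2 (0 : E2 n) = 0 := rfl
lemma fst2_smul (t : ℝ) (z : E2 n) : fst2 (t • z) = t • fst2 z := rfl
lemma snd2_smul (t : ℝ) (z : E2 n) : snd2 (t • z) = t • snd2 z := rfl

lemma eq_zero_iff_fst2_snd2 {w : E2 n} : w = 0 ↔ fst2 w = 0 ∧ snd2 w = 0 := by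
  refine ⟨fun h => h ▸ ⟨rfl, rfl⟩, fun ⟨h₁, h₂⟩ => ?_⟩
  change mk2 (fst2 w) (snd2 w) = 0
  rw [h₁, h₂]
  rfl

@[fun_prop]
lemma continuous_fst2 : Continuous (fst2 : E2 n → E n) :=
  continuous_fst.comp (WithLp.prod_continuous_ofLp 2 (E n) (E n))

@[fun_prop]
lemma continuous_snd2 : Continuous (snd2 : E2 n → E n) :=
  continuous_snd.comp (WithLp.prod_continuous_ofLp 2 (E n) (E n))

lemma isClosed_setOf_mul_norm_snd2_le (c : ℝ) : IsClosed {w : E2 n | c * ‖snd2 w‖ ≤ ‖fst2 w‖} :=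
  isClosed_le (by fun_prop) (by fun_prop)

lemma isClosed_setOf_norm_fst2_le (c : ℝ) : IsClosed {w : E2 n | ‖fst2 w‖ ≤ c * ‖snd2 w‖} :=
  isClosed_le (by fun_prop) (by fun_prop)

lemma mul_norm_snd2_smul_le {c s : ℝ} {w : E2 n} (hs : 0 < s) (h : c * ‖snd2 w‖ ≤ ‖fst2 w‖) :
    c * ‖snd2 (s • w)‖ ≤ ‖fst2 (s • w)‖ := by
  rw [fst2_smul, snd2_smul, norm_smul, norm_smul, Real.norm_of_nonneg hs.le, mul_left_comm]
  exact mul_le_mul_of_nonneg_left h hs.le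

lemma eq_zero_of_norm_fst2_le {c c' : ℝ} {w : E2 n} (h : ‖fst2 w‖ ≤ c * ‖snd2 w‖)
    (h' : c' * ‖snd2 w‖ ≤ ‖fst2 w‖) (hc : c < c') : w = 0 := by
  have hsnd : ‖snd2 w‖ = 0 := by nlinarith [norm_nonneg (snd2 w)]
  have hfst : ‖fst2 w‖ = 0 := le_antisymm (by simpa [hsnd] using h) (norm_nonneg _)
  exact eq_zero_iff_fst2_snd2.2 ⟨norm_eq_zero.1 hfst, norm_eq_zero.1 hsnd⟩

lemma le_of_forall_gt_le_of_continuous {f : ℝ → ℝ} (hf : Continuous f) {a b : ℝ}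
    (h : ∀ ρ > b, a ≤ f ρ) : a ≤ f b :=
  ge_of_tendsto (x := 𝓝[>] b) ((hf.tendsto b).mono_left nhdsWithin_le_nhds)
    (eventually_nhdsWithin_of_forall h)

lemma tendsto_of_dist_lt_one_div {X : Type*} [PseudoMetricSpace X] {x : ℕ → X} {a : X}
    (h : ∀ k : ℕ, dist (x k) a < 1 / ((k : ℝ) + 1)) : Tendsto x atTop (𝓝 a) :=
  tendsto_iff_dist_tendsto_zero.2 <|
    squeeze_zero (fun _ => dist_nonneg) (fun k => (h k).le) tendsto_one_div_add_atTop_nhds_zero_nat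

lemma exists_tendsto_subseq_normalize {H : Type*} [NormedAddCommGroup H] [NormedSpace ℝ H]
    [ProperSpace H] {v : ℕ → H} (hv : ∀ k, v k ≠ 0) :
    ∃ w : H, w ≠ 0 ∧ ∃ φ : ℕ → ℕ, StrictMono φ ∧
      Tendsto (fun j => ‖v (φ j)‖⁻¹ • v (φ j)) atTop (𝓝 w) := by
  have hsph : ∀ k, ‖v k‖⁻¹ • v k ∈ sphere (0 : H) 1 := fun k => by
    simp [norm_smul, hv k]
  obtain ⟨w, hw, φ, hφ, hlim⟩ := (isCompact_sphere (0 : H) 1).tendsto_subseq hsph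
  exact ⟨w, ne_zero_of_mem_unit_sphere ⟨w, hw⟩, φ, hφ, hlim⟩

lemma smul_mem_tcone {H : Type*} [NormedAddCommGroup H] [NormedSpace ℝ H] {A : Set H} {z w : H}
    (hw : w ∈ tcone A z) {s : ℝ} (hs : 0 < s) : s • w ∈ tcone A z := by
  obtain ⟨t, wk, ht, ht0, hwk, hA⟩ := hw
  refine ⟨fun k => t k / s, fun k => s • wk k, fun k => div_pos (ht k) hs, ?_,
    hwk.const_smul s, fun k => ?_⟩
  · simpa using ht0.div_const s
  · rw [smul_smul, div_mul_cancel₀ _ hs.ne']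
    exact hA k

lemma zero_mem_tcone {H : Type*} [NormedAddCommGroup H] [NormedSpace ℝ H] {A : Set H} {z : H}
    (hz : z ∈ A) : (0 : H) ∈ tcone A z :=
  ⟨fun k => 1 / ((k : ℝ) + 1), fun _ => 0, fun _ => by positivity,
    tendsto_one_div_add_atTop_nhds_zero_nat, tendsto_const_nhds, fun _ => by simpa using hz⟩

lemma smul_mem_DsharpG {F : E n → Set (E n)} {zb w : E2 n} (hw : w ∈ DsharpG F zb) {s : ℝ}
    (hs : 0 < s) : s • w ∈ DsharpG F zb := by
  obtain ⟨zk, wk, h, hz, hwk⟩ := hw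
  exact ⟨zk, fun k => s • wk k, fun k => ⟨(h k).1, smul_mem_tcone (h k).2 hs⟩, hz,
    hwk.const_smul s⟩

lemma zero_mem_DsharpG {F : E n → Set (E n)} {zb : E2 n} (hzb : zb ∈ gph F) :
    (0 : E2 n) ∈ DsharpG F zb :=
  ⟨fun _ => zb, fun _ => 0, fun _ => ⟨hzb, zero_mem_tcone hzb⟩, tendsto_const_nhds,
    tendsto_const_nhds⟩

/-- The outer norm of the inverse of the relation `A ⊆ ℝⁿ × ℝⁿ` is at most `c`. -/
def InvNormLE (A : Set (E2 n)) (c : ℝ) : Prop := ∀ w ∈ A, ‖fst2 w‖ ≤ c * ‖snd2 w‖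

lemma InvNormLE.mono {A : Set (E2 n)} {c c' : ℝ} (h : InvNormLE A c) (hc : c ≤ c') :
    InvNormLE A c' :=
  fun w hw => (h w hw).trans (mul_le_mul_of_nonneg_right hc (norm_nonneg _))

lemma InvNormLE.of_forall_gt {A : Set (E2 n)} {c : ℝ} (h : ∀ c' > c, InvNormLE A c') :
    InvNormLE A c :=
  fun w hw => le_of_forall_gt_le_of_continuous (f := (· * ‖snd2 w‖)) (by fun_prop)
    fun c' hc' => h c' hc' w hw

lemma invNormLE_iff_mem_upperBounds {A : Set (E2 n)} (hA : ∀ w ∈ A, ∀ s : ℝ, 0 < s → s • w ∈ A)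
    {c : ℝ} (hc : 0 ≤ c) :
    InvNormLE A c ↔ c ∈ upperBounds {r | ∃ w ∈ A, ‖snd2 w‖ ≤ 1 ∧ r = ‖fst2 w‖} := by
  refine ⟨fun h r ⟨w, hw, hw1, hr⟩ => ?_, fun h w hw => ?_⟩
  · calc r ≤ c * ‖snd2 w‖ := hr ▸ h w hw
      _ ≤ c := mul_le_of_le_one_right hc hw1
  · refine le_of_forall_gt_le_of_continuous (f := (c * ·)) (by fun_prop) fun ρ hρ => ?_
    have hρ0 : 0 < ρ := (norm_nonneg _).trans_lt hρ
    have hscaled := h ⟨ρ⁻¹ • w, hA w hw _ (inv_pos.2 hρ0), ?_, rfl⟩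
    · rw [fst2_smul, norm_smul, norm_inv, Real.norm_of_nonneg hρ0.le] at hscaled
      rwa [inv_mul_le_iff₀ hρ0, mul_comm] at hscaled
    · rw [snd2_smul, norm_smul, norm_inv, Real.norm_of_nonneg hρ0.le]
      exact inv_mul_le_one_of_le₀ hρ.le hρ0.le

lemma exists_ne_zero_mem_tcone_of_tendsto {A : Set (E2 n)} {z : E2 n} {p : ℕ → E2 n} {c : ℝ}
    (hpA : ∀ k, p k ∈ A) (hp : Tendsto p atTop (𝓝 z))
    (hc : ∀ k, c * ‖snd2 (p k - z)‖ < ‖fst2 (p k - z)‖) :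
    ∃ w ∈ tcone A z, w ≠ 0 ∧ c * ‖snd2 w‖ ≤ ‖fst2 w‖ := by
  have hne : ∀ k, p k - z ≠ 0 := fun k h0 => by simpa [h0, fst2_zero, snd2_zero] using hc k
  obtain ⟨w, hw0, φ, hφ, hlim⟩ := exists_tendsto_subseq_normalize hne
  have hpos : ∀ j, 0 < ‖p (φ j) - z‖ := fun j => norm_pos_iff.2 (hne _)
  refine ⟨w, ⟨fun j => ‖p (φ j) - z‖, _, hpos, ?_, hlim, fun j => ?_⟩, hw0, ?_⟩
  · exact (tendsto_iff_norm_sub_tendsto_zero.1 hp).comp hφ.tendsto_atTop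
  · rw [smul_inv_smul₀ (hpos j).ne', add_sub_cancel]
    exact hpA _
  · exact (isClosed_setOf_mul_norm_snd2_le c).mem_of_tendsto hlim
      (Eventually.of_forall fun j => mul_norm_snd2_smul_le (inv_pos.2 (hpos j)) (hc _).le)

def StrSubregWith (F : E n → Set (E n)) (z : E2 n) (κ : ℝ) : Prop :=
  ∃ δ > (0 : ℝ), ∀ x', dist x' (fst2 z) < δ → ∀ y' ∈ F x', dist x' (fst2 z) ≤ κ * dist y' (snd2 z)

lemma ofReal_dist_le_infEDist_of_isolated {X : Type*} [PseudoMetricSpace X] {S : Set X}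
    {x x' : X} {δ : ℝ} (hiso : ∀ p ∈ S, dist p x < δ → p = x) (hx' : dist x' x < δ / 2) :
    ENNReal.ofReal (dist x' x) ≤ Metric.infEDist x' S := by
  refine Metric.le_infEDist.2 fun p hp => ?_
  rw [edist_dist]
  refine ENNReal.ofReal_le_ofReal ?_
  by_cases hpx : dist p x < δ
  · rw [hiso p hp hpx]
  · linarith [dist_triangle p x' x, dist_comm p x']

lemma SubregWith.strSubregWith {F : E n → Set (E n)} {z : E2 n} {κ : ℝ} (h : SubregWith F z κ)
    (hκ : 0 ≤ κ)
    (hiso : ∃ δ > (0 : ℝ), ∀ x' ∈ Finv F (snd2 z), dist x' (fst2 z) < δ → x' = fst2 z) :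
    StrSubregWith F z κ := by
  obtain ⟨δ, hδ, h⟩ := h
  obtain ⟨δ', hδ', hiso⟩ := hiso
  refine ⟨min δ (δ' / 2), by positivity, fun x' hx' y' hy' => ?_⟩
  refine (ENNReal.ofReal_le_ofReal_iff (by positivity)).1 ?_
  calc ENNReal.ofReal (dist x' (fst2 z))
      ≤ Metric.infEDist x' (Finv F (snd2 z)) :=
        ofReal_dist_le_infEDist_of_isolated hiso (hx'.trans_le (min_le_right _ _))
    _ ≤ ENNReal.ofReal κ * Metric.infEDist (snd2 z) (F x') := h x' (hx'.trans_le (min_le_left _ _))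
    _ ≤ ENNReal.ofReal κ * edist (snd2 z) y' := by gcongr; exact Metric.infEDist_le_edist_of_mem hy'
    _ = ENNReal.ofReal (κ * dist y' (snd2 z)) := by rw [edist_dist, dist_comm, ENNReal.ofReal_mul hκ]

lemma StrSubregWith.strSubregAt {F : E n → Set (E n)} {z : E2 n} {κ : ℝ} (h : StrSubregWith F z κ)
    (hz : z ∈ gph F) (hκ : 0 < κ) : StrSubregAt F z ∧ subregMod F z ≤ κ := by
  obtain ⟨δ, hδ, h⟩ := h
  have hsub : SubregWith F z κ := by
    refine ⟨δ, hδ, fun x' hx' => ?_⟩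
    calc Metric.infEDist x' (Finv F (snd2 z)) ≤ ENNReal.ofReal (dist x' (fst2 z)) := by
          rw [← edist_dist]; exact Metric.infEDist_le_edist_of_mem hz
      _ = ENNReal.ofReal κ * ENNReal.ofReal (dist x' (fst2 z) / κ) := by
          rw [← ENNReal.ofReal_mul hκ.le, mul_div_cancel₀ _ hκ.ne']
      _ ≤ ENNReal.ofReal κ * Metric.infEDist (snd2 z) (F x') := by
          refine mul_le_mul_right (Metric.le_infEDist.2 fun y' hy' => ?_) _
          rw [edist_dist, dist_comm (snd2 z)]
          exact ENNReal.ofReal_le_ofReal ((div_le_iff₀' hκ).2 (h x' hx' y' hy'))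
  have hiso : ∃ δ > (0 : ℝ), ∀ x' ∈ Finv F (snd2 z), dist x' (fst2 z) < δ → x' = fst2 z :=
    ⟨δ, hδ, fun x' hx' hd => dist_le_zero.1 (by simpa using h x' hd _ hx')⟩
  exact ⟨⟨⟨κ, hκ.le, hsub⟩, hiso⟩, csInf_le ⟨0, fun _ h => h.1⟩ ⟨hκ.le, hsub⟩⟩

lemma StrSubregWith.invNormLE_tcone {F : E n → Set (E n)} {z : E2 n} {κ : ℝ}
    (h : StrSubregWith F z κ) : InvNormLE (tcone (gph F) z) κ := by
  rintro w ⟨t, s, ht, ht0, hs, hA⟩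
  obtain ⟨δ, hδ, h⟩ := h
  have hsmall : Tendsto (fun j => t j * ‖fst2 (s j)‖) atTop (𝓝 0) := by
    simpa using ht0.mul ((continuous_fst2.norm.tendsto w).comp hs)
  refine (isClosed_setOf_norm_fst2_le κ).mem_of_tendsto hs ?_
  filter_upwards [hsmall.eventually_lt_const hδ] with j hj
  have key := h (fst2 z + t j • fst2 (s j)) (by simpa [norm_smul, abs_of_pos (ht j)] using hj) _ (hA j)
  simp only [snd2_add, snd2_smul, dist_self_add_left, norm_smul, Real.norm_of_nonneg (ht j).le]
    at key
  rw [← mul_le_mul_iff_right₀ (ht j), mul_left_comm]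
  exact key

lemma strSubregWith_of_invNormLE_tcone {F : E n → Set (E n)} {z : E2 n} {c κ : ℝ} (hκ : 0 < κ)
    (hcκ : c < κ) (h : InvNormLE (tcone (gph F) z) c) : StrSubregWith F z κ := by
  unfold StrSubregWith
  by_contra! hcon
  choose x hx y hy hlt using fun k : ℕ => hcon (1 / ((k : ℝ) + 1)) (by positivity)
  have hxlim : Tendsto x atTop (𝓝 (fst2 z)) := tendsto_of_dist_lt_one_div hx
  have hylim : Tendsto y atTop (𝓝 (snd2 z)) := by
    refine tendsto_iff_dist_tendsto_zero.2 (squeeze_zero (fun _ => dist_nonneg) (fun k => ?_)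
      (by simpa using (tendsto_iff_dist_tendsto_zero.1 hxlim).div_const κ))
    exact (le_div_iff₀' hκ).2 (hlt k).le
  have hp : Tendsto (fun k => mk2 (x k) (y k)) atTop (𝓝 z) :=
    ((WithLp.prod_continuous_toLp 2 (E n) (E n)).tendsto _).comp (hxlim.prodMk_nhds hylim)
  obtain ⟨w, hw, hw0, hwκ⟩ := exists_ne_zero_mem_tcone_of_tendsto (A := gph F) hy hp
    (c := κ) fun k => by simpa [fst2_sub, snd2_sub, fst2_mk2, snd2_mk2, dist_eq_norm] using hlt k
  exact hw0 (eq_zero_of_norm_fst2_le (h w hw) hwκ hcκ)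

lemma invNormLE_tcone_of_strSubregAt {F : E n → Set (E n)} {z : E2 n} {c : ℝ}
    (h : StrSubregAt F z) (hc : subregMod F z ≤ c) : InvNormLE (tcone (gph F) z) c := by
  obtain ⟨⟨κ₀, hκ₀⟩, hiso⟩ := h
  refine InvNormLE.of_forall_gt fun κ hκ => ?_
  obtain ⟨κ', ⟨hκ'0, hκ'⟩, hκ'κ⟩ := exists_lt_of_csInf_lt ⟨κ₀, hκ₀⟩ (hc.trans_lt hκ)
  have hsub : SubregWith F z κ := by
    obtain ⟨δ, hδ, h⟩ := hκ'
    exact ⟨δ, hδ, fun x' hx' => (h x' hx').trans (by gcongr)⟩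
  exact (hsub.strSubregWith (hκ'0.trans hκ'κ.le) hiso).invNormLE_tcone

lemma strSubregAt_of_invNormLE_tcone {F : E n → Set (E n)} {z : E2 n} {c : ℝ} (hz : z ∈ gph F)
    (hc : 0 ≤ c) (h : InvNormLE (tcone (gph F) z) c) : StrSubregAt F z ∧ subregMod F z ≤ c := by
  have key : ∀ κ > c, StrSubregAt F z ∧ subregMod F z ≤ κ := fun κ hκ =>
    (strSubregWith_of_invNormLE_tcone (hc.trans_lt hκ) hκ h).strSubregAt hz (hc.trans_lt hκ)
  exact ⟨(key (c + 1) (by linarith)).1, le_of_forall_gt_imp_ge_of_dense fun κ hκ => (key κ hκ).2⟩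

lemma InvNormLE.DsharpG {F : E n → Set (E n)} {zb : E2 n} {c : ℝ}
    (h : ∀ᶠ z in 𝓝[gph F] zb, InvNormLE (tcone (gph F) z) c) : InvNormLE (DsharpG F zb) c := by
  rintro w ⟨zk, wk, hk, hz, hw⟩
  have hzk : Tendsto zk atTop (𝓝[gph F] zb) :=
    tendsto_nhdsWithin_iff.2 ⟨hz, Eventually.of_forall fun k => (hk k).1⟩
  exact (isClosed_setOf_norm_fst2_le c).mem_of_tendsto hw
    ((hzk.eventually h).mono fun k hk' => hk' _ (hk k).2)

lemma exists_ne_zero_mem_DsharpG_of_frequently {F : E n → Set (E n)} {zb : E2 n} {c : ℕ → ℝ}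
    (hc : Monotone c) (h : ∀ k, ∃ᶠ z in 𝓝[gph F] zb, ¬InvNormLE (tcone (gph F) z) (c k)) :
    ∃ w ∈ DsharpG F zb, w ≠ 0 ∧ ∀ k, c k * ‖snd2 w‖ ≤ ‖fst2 w‖ := by
  have hbad : ∀ k : ℕ, ∃ z ∈ gph F, dist z zb < 1 / ((k : ℝ) + 1) ∧
      ∃ v ∈ tcone (gph F) z, c k * ‖snd2 v‖ < ‖fst2 v‖ := fun k => by
    obtain ⟨z, ⟨hbad, hzF⟩, hzd⟩ :=
      ((frequently_nhdsWithin_iff.1 (h k)).and_eventually (ball_mem_nhds zb Nat.one_div_pos_of_nat)).exists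
    simp only [InvNormLE, not_forall, not_le, exists_prop] at hbad
    exact ⟨z, hzF, hzd, hbad⟩
  choose z hzF hzd v hv hlt using hbad
  have hne : ∀ k, v k ≠ 0 := fun k h0 => by simpa [h0, fst2_zero, snd2_zero] using hlt k
  obtain ⟨w, hw0, φ, hφ, hlim⟩ := exists_tendsto_subseq_normalize hne
  have hpos : ∀ j, 0 < ‖v (φ j)‖⁻¹ := fun j => inv_pos.2 (norm_pos_iff.2 (hne _))
  refine ⟨w, ⟨z ∘ φ, _, fun j => ⟨hzF _, smul_mem_tcone (hv _) (hpos j)⟩,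
    (tendsto_of_dist_lt_one_div hzd).comp hφ.tendsto_atTop, hlim⟩, hw0, fun k => ?_⟩
  refine (isClosed_setOf_mul_norm_snd2_le (c k)).mem_of_tendsto hlim ?_
  filter_upwards [eventually_ge_atTop k] with j hj
  refine mul_norm_snd2_smul_le (hpos j) ((mul_le_mul_of_nonneg_right ?_ (norm_nonneg _)).trans
    (hlt (φ j)).le)
  exact hc (hj.trans (hφ.id_le j))

lemma exists_eventually_invNormLE_tcone {F : E n → Set (E n)} {zb : E2 n}
    (H : ∀ u : E n, mk2 u 0 ∈ DsharpG F zb → u = 0) :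
    ∃ c, ∀ᶠ z in 𝓝[gph F] zb, InvNormLE (tcone (gph F) z) c := by
  by_contra! hcon
  obtain ⟨w, hw, hw0, hk⟩ := exists_ne_zero_mem_DsharpG_of_frequently Nat.mono_cast
    fun k : ℕ => hcon k
  have hsnd : snd2 w = 0 := by
    by_contra hne
    obtain ⟨k, hk'⟩ := exists_nat_gt (‖fst2 w‖ / ‖snd2 w‖)
    rw [div_lt_iff₀ (norm_pos_iff.2 hne)] at hk'
    linarith [hk k]
  have hfst : fst2 w = 0 := H _ (by rwa [← hsnd])
  exact hw0 (eq_zero_iff_fst2_snd2.2 ⟨hfst, hsnd⟩)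

lemma eventually_invNormLE_tcone_of_DsharpG {F : E n → Set (E n)} {zb : E2 n} {m c : ℝ}
    (h : InvNormLE (DsharpG F zb) m) (hmc : m < c) :
    ∀ᶠ z in 𝓝[gph F] zb, InvNormLE (tcone (gph F) z) c := by
  by_contra hcon
  obtain ⟨w, hw, hw0, hc⟩ := exists_ne_zero_mem_DsharpG_of_frequently monotone_const
    fun _ : ℕ => not_eventually.1 hcon
  exact hw0 (eq_zero_of_norm_fst2_le (h w hw) (hc 0) hmc)

lemma strSubregAround_iff_eventually {F : E n → Set (E n)} {zb : E2 n} :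
    StrSubregAround F zb ↔ ∃ c, ∀ᶠ z in 𝓝[gph F] zb, StrSubregAt F z ∧ subregMod F z ≤ c := by
  simp only [eventually_nhdsWithin_iff, Metric.eventually_nhds_iff]
  constructor
  · rintro ⟨δ, hδ, hstr, c, hc⟩
    exact ⟨c, δ, hδ, fun z hd hz => ⟨hstr z hz hd, hc z hz hd⟩⟩
  · rintro ⟨c, δ, hδ, h⟩
    exact ⟨δ, hδ, fun z hz hd => (h hd hz).1, c, fun z hz hd => (h hd hz).2⟩

lemma strSubregAround_iff_eventually_invNormLE_tcone {F : E n → Set (E n)} {zb : E2 n} :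
    StrSubregAround F zb ↔ ∃ c, ∀ᶠ z in 𝓝[gph F] zb, InvNormLE (tcone (gph F) z) c := by
  rw [strSubregAround_iff_eventually]
  constructor
  · rintro ⟨c, h⟩
    exact ⟨c, h.mono fun z hz => invNormLE_tcone_of_strSubregAt hz.1 hz.2⟩
  · rintro ⟨c, h⟩
    refine ⟨max c 0, ?_⟩
    filter_upwards [h, self_mem_nhdsWithin] with z hz hzF
    exact strSubregAt_of_invNormLE_tcone hzF (le_max_right c 0) (hz.mono (le_max_left c 0))

lemma subregMod_nonneg (F : E n → Set (E n)) (z : E2 n) : 0 ≤ subregMod F z :=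
  Real.sInf_nonneg fun _ hκ => hκ.1

lemma StrSubregAround.isBoundedUnder {F : E n → Set (E n)} {zb : E2 n}
    (h : StrSubregAround F zb) : IsBoundedUnder (· ≤ ·) (𝓝[gph F] zb) (subregMod F) := by
  obtain ⟨c, hc⟩ := strSubregAround_iff_eventually.1 h
  exact isBoundedUnder_of_eventually_le (hc.mono fun _ hz => hz.2)

lemma StrSubregAround.lsubreg_nonneg {F : E n → Set (E n)} {zb : E2 n} (hzb : zb ∈ gph F)
    (h : StrSubregAround F zb) : 0 ≤ lsubreg F zb :=
  have : (𝓝[gph F] zb).NeBot := nhdsWithin_neBot_of_mem hzb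
  le_limsup_of_frequently_le (Frequently.of_forall (subregMod_nonneg F)) h.isBoundedUnder

lemma StrSubregAround.invNormLE_DsharpG {F : E n → Set (E n)} {zb : E2 n}
    (h : StrSubregAround F zb) : InvNormLE (DsharpG F zb) (lsubreg F zb) := by
  obtain ⟨c, hc⟩ := strSubregAround_iff_eventually.1 h
  refine InvNormLE.of_forall_gt fun ρ hρ => InvNormLE.DsharpG ?_
  filter_upwards [hc, eventually_lt_of_limsup_lt hρ h.isBoundedUnder] with z hz hlt
  exact invNormLE_tcone_of_strSubregAt hz.1 hlt.le

lemma lsubreg_le_of_invNormLE_DsharpG {F : E n → Set (E n)} {zb : E2 n} {m : ℝ}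
    (hzb : zb ∈ gph F) (hm : 0 ≤ m) (h : InvNormLE (DsharpG F zb) m) : lsubreg F zb ≤ m := by
  have : (𝓝[gph F] zb).NeBot := nhdsWithin_neBot_of_mem hzb
  refine le_of_forall_pos_le_add fun ε hε => limsup_le_of_le
    (isCoboundedUnder_le_of_eventually_le _ (Eventually.of_forall (subregMod_nonneg F))) ?_
  filter_upwards [eventually_invNormLE_tcone_of_DsharpG h (lt_add_of_pos_right m hε),
    self_mem_nhdsWithin] with z hz hzF
  exact (strSubregAt_of_invNormLE_tcone hzF (by positivity) hz).2

theorem stmt15 (n : ℕ) (F : E n → Set (E n)) (zb : E2 n) (hzb : zb ∈ gph F) :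
    (StrSubregAround F zb ↔ ∀ u : E n, mk2 u 0 ∈ DsharpG F zb → u = 0) ∧
    (StrSubregAround F zb →
      lsubreg F zb = sSup {r | ∃ w ∈ DsharpG F zb, ‖snd2 w‖ ≤ 1 ∧ r = ‖fst2 w‖}) := by
  refine ⟨⟨fun h u hu => ?_, fun H => strSubregAround_iff_eventually_invNormLE_tcone.2
    (exists_eventually_invNormLE_tcone H)⟩, fun h => ?_⟩
  · simpa [fst2_mk2, snd2_mk2] using h.invNormLE_DsharpG _ hu
  · have hcone : ∀ w ∈ DsharpG F zb, ∀ s : ℝ, 0 < s → s • w ∈ DsharpG F zb :=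
      fun w hw s hs => smul_mem_DsharpG hw hs
    have hL := (invNormLE_iff_mem_upperBounds hcone (h.lsubreg_nonneg hzb)).1 h.invNormLE_DsharpG
    have h0 : (0 : ℝ) ∈ {r | ∃ w ∈ DsharpG F zb, ‖snd2 w‖ ≤ 1 ∧ r = ‖fst2 w‖} :=
      ⟨0, zero_mem_DsharpG hzb, by simp [snd2_zero], by simp [fst2_zero]⟩
    have hM0 := le_csSup ⟨_, hL⟩ h0
    refine le_antisymm (lsubreg_le_of_invNormLE_DsharpG hzb hM0 ?_) (csSup_le ⟨0, h0⟩ hL)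
    exact (invNormLE_iff_mem_upperBounds hcone hM0).2 fun r hr => le_csSup ⟨_, hL⟩ hr

end SCD
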